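/- Let P ⊆ ℝ^d be a polytope whose vertices are labelled v_1, …, v_V so that, for a nonzero a ∈ ℝ^d, the gaps Δ_j = a·(v_j − v_1) satisfy 0 = Δ_1 < Δ_2 < ⋯ < Δ_V. Let D be the diameter of P, ‖P‖ = max{‖x − y_1‖ : x ∈ P}, α ≥ 3 and β = 1/3 − 1/α. Let a_1, …, a_n ∈ ℝ^d with ε_{n+1} = (1/√n)·Σ_{i=1}^n (a − a_i), and let x_{n+1} = P_P(y_1 − η·(a_1 + ⋯ + a_n)/√n) for a parameter η > 0. If, for some j ∈ {2, …, V}, n > (α‖P‖/(η‖a‖))²·(1 + D²‖a‖²/Δ_j²) and ‖ε_{n+1}‖ < β·√n·‖a‖·(1 + D²‖a‖²/Δ_j²)^{−1/2}, then a·(x_{n+1} − v_1) ≤ Δ_{j−1}. -/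

import Mathlib

/-!
Write `x'` as a convex combination of vertices and let `λ` be the weight it puts on the vertices
whose gap `⟪a, v k - v 1⟫` is at least `Δ_j`. Moving that weight onto `v 1` displaces `x'` by a
vector `u` with `⟪a, u⟫ ≥ λ Δ_j` and `‖u‖ ≤ λ D`, and keeps it in `P`. Since the projected point is
`y1 - η √n a + η ε`, the variational inequality of the projection gives
`η √n ⟪a, u⟫ ≤ (K + η ‖ε‖) ‖u‖`. The hypotheses on `n` and `ε` give
`(K + η ‖ε‖) D < η √n Δ_j`, so `λ = 0` and `x'` lies in the hull of `v 1, …, v (j - 1)`.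
-/

open Finset
open scoped RealInnerProductSpace

/-- `IsProjOn X p q` says that `q` is the Euclidean nearest-point projection of `p`
onto the set `X`. -/
def IsProjOn {d : ℕ} (X : Set (EuclideanSpace ℝ (Fin d)))
    (p q : EuclideanSpace ℝ (Fin d)) : Prop :=
  q ∈ X ∧ ∀ z ∈ X, ‖p - q‖ ≤ ‖p - z‖

namespace IsProjOn

variable {d : ℕ} {X : Set (EuclideanSpace ℝ (Fin d))} {p q : EuclideanSpace ℝ (Fin d)}

theorem inner_sub_nonpos (h : IsProjOn X p q) (hX : Convex ℝ X) :
    ∀ z ∈ X, ⟪p - q, z - q⟫ ≤ 0 := by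
  have : Nonempty X := ⟨⟨q, h.1⟩⟩
  have hbdd : BddBelow (Set.range fun z : X => ‖p - z‖) := ⟨0, by rintro _ ⟨z, rfl⟩; positivity⟩
  exact (norm_eq_iInf_iff_real_inner_le_zero hX h.1).1 <|
    le_antisymm (le_ciInf fun z => h.2 z z.2) (ciInf_le hbdd ⟨q, h.1⟩)

theorem mul_inner_sub_le {a b e : EuclideanSpace ℝ (Fin d)} {t : ℝ}
    (h : IsProjOn X (b - t • a + e) q) (hX : Convex ℝ X) {y : EuclideanSpace ℝ (Fin d)}
    (hy : y ∈ X) : t * ⟪a, q - y⟫ ≤ (‖b - q‖ + ‖e‖) * ‖q - y‖ := by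
  have hvar := h.inner_sub_nonpos hX y hy
  rw [show b - t • a + e - q = (b - q) - t • a + e by abel, show y - q = -(q - y) by abel,
    inner_neg_right, inner_add_left, inner_sub_left, real_inner_smul_left] at hvar
  linarith [real_inner_le_norm (b - q) (q - y), real_inner_le_norm e (q - y)]

end IsProjOn

theorem inner_sub_le_of_mul_inner_sub_le {E : Type*} [NormedAddCommGroup E]
    [InnerProductSpace ℝ E] {s : Set E} {o a q : E} {T M D Δ Δ' : ℝ}
    (ho : o ∈ s) (hq : q ∈ convexHull ℝ s)
    (happrox : ∀ y ∈ convexHull ℝ s, T * ⟪a, q - y⟫ ≤ M * ‖q - y‖) (hT : 0 ≤ T) (hM : 0 ≤ M)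
    (hD : ∀ z ∈ s, ‖z - o‖ ≤ D) (hMD : M * D < T * Δ)
    (hgap : ∀ z ∈ s, ⟪a, z - o⟫ < Δ → ⟪a, z - o⟫ ≤ Δ') :
    ⟪a, q - o⟫ ≤ Δ' := by
  classical
  obtain ⟨ι, _, w, z, hw0, hw1, hz, rfl⟩ := mem_convexHull_iff_exists_fintype.mp hq
  set high : Finset ι := univ.filter fun i => Δ ≤ ⟪a, z i - o⟫
  set lam := ∑ i ∈ high, w i
  set y := ∑ i, w i • (if Δ ≤ ⟪a, z i - o⟫ then o else z i)
  have hy : y ∈ convexHull ℝ s :=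
    (convex_convexHull ℝ s).sum_mem (fun i _ => hw0 i) hw1 fun i _ =>
      subset_convexHull ℝ s (by split_ifs; exacts [ho, hz i])
  have hqy : ∑ i, w i • z i - y = ∑ i ∈ high, w i • (z i - o) := by
    rw [sum_filter, ← sum_sub_distrib]
    refine sum_congr rfl fun i _ => ?_
    split_ifs <;> simp [smul_sub]
  have hgain : lam * Δ ≤ ⟪a, ∑ i, w i • z i - y⟫ := by
    rw [hqy, inner_sum, sum_mul]
    refine sum_le_sum fun i hi => ?_
    rw [real_inner_smul_right]
    exact mul_le_mul_of_nonneg_left (mem_filter.1 hi).2 (hw0 i)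
  have hdist : ‖∑ i, w i • z i - y‖ ≤ lam * D := by
    rw [hqy, sum_mul]
    refine (norm_sum_le _ _).trans (sum_le_sum fun i _ => ?_)
    rw [norm_smul, Real.norm_of_nonneg (hw0 i)]
    exact mul_le_mul_of_nonneg_left (hD _ (hz i)) (hw0 i)
  have hlam : lam = 0 := by
    have hlam0 : 0 ≤ lam := sum_nonneg fun i _ => hw0 i
    nlinarith [happrox y hy, mul_le_mul_of_nonneg_left hdist hM,
      mul_le_mul_of_nonneg_left hgain hT]
  have hw_high : ∀ i, Δ ≤ ⟪a, z i - o⟫ → w i = 0 := fun i hi =>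
    (sum_eq_zero_iff_of_nonneg fun i _ => hw0 i).1 hlam i (mem_filter.2 ⟨mem_univ i, hi⟩)
  calc ⟪a, ∑ i, w i • z i - o⟫ = ∑ i, w i * ⟪a, z i - o⟫ := by
        rw [show ∑ i, w i • z i - o = ∑ i, w i • (z i - o) by
          simp [smul_sub, sum_sub_distrib, ← sum_smul, hw1], inner_sum]
        simp only [real_inner_smul_right]
    _ ≤ ∑ i, w i * Δ' := sum_le_sum fun i _ => by
        by_cases h : Δ ≤ ⟪a, z i - o⟫
        · simp [hw_high i h]
        · exact mul_le_mul_of_nonneg_left (hgap _ (hz i) (not_le.1 h)) (hw0 i)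
    _ = Δ' := by rw [← sum_mul, hw1, one_mul]

theorem div_sqrt_card_smul_sum_eq {ι F : Type*} [AddCommGroup F] [Module ℝ F] (s : Finset ι)
    (A : ι → F) (a : F) (η : ℝ) :
    (η / √(#s : ℝ)) • ∑ i ∈ s, A i =
      (η * √(#s : ℝ)) • a - η • ((√(#s : ℝ))⁻¹ • ∑ i ∈ s, (a - A i)) := by
  rcases s.eq_empty_or_nonempty with rfl | hs
  · simp
  have hm : 0 < √(#s : ℝ) := Real.sqrt_pos.2 (by exact_mod_cast hs.card_pos)
  have hcard := Real.mul_self_sqrt (Nat.cast_nonneg (α := ℝ) #s)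
  set m := √(#s : ℝ)
  rw [sum_sub_distrib, sum_const, ← Nat.cast_smul_eq_nsmul ℝ, ← hcard]
  match_scalars <;> field_simp
  ring

theorem gap_margin_of_large_n_small_error {α η K D E A Δ s : ℝ} (hα : 3 ≤ α) (hη : 0 < η)
    (hK : 0 ≤ K) (hD : 0 ≤ D) (hE0 : 0 ≤ E) (hA : 0 < A) (hΔ : 0 < Δ) (hs : 0 ≤ s)
    (hn : (α * K / (η * A)) ^ 2 * (1 + D ^ 2 * A ^ 2 / Δ ^ 2) < s ^ 2)
    (hE : E < (1 / 3 - 1 / α) * s * A * (1 + D ^ 2 * A ^ 2 / Δ ^ 2) ^ (-(1 : ℝ) / 2)) :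
    (K + η * E) * D < η * s * Δ := by
  set c := D ^ 2 * A ^ 2 / Δ ^ 2
  set R := √(1 + c)
  have hR : 0 < R := Real.sqrt_pos.2 (by positivity)
  have hDR : D * A ≤ R * Δ := by
    rw [← div_le_iff₀ hΔ]
    exact Real.le_sqrt_of_sq_le (by rw [div_pow, mul_pow]; linarith)
  have hKR : α * K * R < η * A * s := by
    have : α * K / (η * A) * R < s :=
      lt_of_pow_lt_pow_left₀ 2 hs (by rwa [mul_pow, Real.sq_sqrt (by positivity)])
    rwa [div_mul_eq_mul_div, div_lt_iff₀ (by positivity), mul_comm s] at this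
  have hER : E * R < (1 / 3 - 1 / α) * s * A := by
    rwa [neg_div, Real.rpow_neg (by positivity), ← Real.sqrt_eq_rpow, ← div_eq_mul_inv,
      lt_div_iff₀ hR] at hE
  have hKD : 3 * K * D < η * s * Δ := by
    refine lt_of_mul_lt_mul_right ?_ hA.le
    calc 3 * K * D * A ≤ α * K * (D * A) := by nlinarith [mul_nonneg (mul_nonneg hK hD) hA.le]
      _ ≤ α * K * (R * Δ) := mul_le_mul_of_nonneg_left hDR (by positivity)
      _ < η * A * s * Δ := by nlinarith [mul_lt_mul_of_pos_right hKR hΔ]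
      _ = η * s * Δ * A := by ring
  have hED : 3 * E * D ≤ s * Δ := by
    refine le_of_mul_le_mul_right ?_ hA
    have hα' : 0 < 1 / α := by positivity
    calc 3 * E * D * A ≤ 3 * E * (R * Δ) := by nlinarith [mul_le_mul_of_nonneg_left hDR hE0]
      _ ≤ 3 * ((1 / 3 - 1 / α) * s * A) * Δ := by
        nlinarith [mul_le_mul_of_nonneg_right hER.le hΔ.le]
      _ ≤ s * Δ * A := by nlinarith [mul_nonneg (mul_nonneg hs hA.le) hΔ.le]
  nlinarith

theorem large_n_small_error_regret_gap {d : ℕ}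
    (V : ℕ) (hV : 1 ≤ V)
    (v : ℕ → EuclideanSpace ℝ (Fin d))
    (P : Set (EuclideanSpace ℝ (Fin d)))
    (hP : P = convexHull ℝ (v '' Set.Icc 1 V))
    (a : EuclideanSpace ℝ (Fin d)) (ha : a ≠ 0)
    (hmono : ∀ i j, 1 ≤ i → i < j → j ≤ V → ⟪a, v i - v 1⟫ < ⟪a, v j - v 1⟫)
    (y1 : EuclideanSpace ℝ (Fin d))
    (D K : ℝ)
    (hD : IsGreatest {r : ℝ | ∃ x ∈ P, ∃ y ∈ P, r = ‖x - y‖} D)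
    (hK : IsGreatest {r : ℝ | ∃ x ∈ P, r = ‖x - y1‖} K)
    (α : ℝ) (hα : 3 ≤ α)
    (η : ℝ) (hη : 0 < η)
    (n : ℕ) (A : ℕ → EuclideanSpace ℝ (Fin d))
    (x' : EuclideanSpace ℝ (Fin d))
    (hx' : IsProjOn P (y1 - (η / Real.sqrt n) • ∑ i ∈ Icc 1 n, A i) x')
    (j : ℕ) (hj2 : 2 ≤ j) (hjV : j ≤ V)
    (hn : (α * K / (η * ‖a‖)) ^ 2 * (1 + D ^ 2 * ‖a‖ ^ 2 / ⟪a, v j - v 1⟫ ^ 2) < (n : ℝ))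
    (hε : ‖(Real.sqrt n)⁻¹ • ∑ i ∈ Icc 1 n, (a - A i)‖ <
      (1 / 3 - 1 / α) * Real.sqrt n * ‖a‖ *
        (1 + D ^ 2 * ‖a‖ ^ 2 / ⟪a, v j - v 1⟫ ^ 2) ^ (-(1 : ℝ) / 2)) :
    ⟪a, x' - v 1⟫ ≤ ⟪a, v (j - 1) - v 1⟫ := by
  subst hP
  set ε := (Real.sqrt n)⁻¹ • ∑ i ∈ Icc 1 n, (a - A i)
  have hgain : StrictMonoOn (fun k => ⟪a, v k - v 1⟫) (Set.Icc 1 V) :=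
    fun i hi k hk hik => hmono i k hi.1 hik hk.2
  have hΔj : 0 < ⟪a, v j - v 1⟫ := by simpa using hmono 1 j le_rfl hj2 hjV
  have hvP := subset_convexHull ℝ (v '' Set.Icc 1 V)
  have hv1 : v 1 ∈ v '' Set.Icc 1 V := Set.mem_image_of_mem v ⟨le_rfl, hV⟩
  have hD0 : 0 ≤ D := hD.2 ⟨v 1, hvP hv1, v 1, hvP hv1, by simp⟩
  have hKx' : ‖y1 - x'‖ ≤ K := hK.2 ⟨x', hx'.1, norm_sub_rev _ _⟩
  have hK0 : 0 ≤ K := (norm_nonneg _).trans hKx'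
  have hmargin : (K + η * ‖ε‖) * D < η * √n * ⟪a, v j - v 1⟫ :=
    gap_margin_of_large_n_small_error hα hη hK0 hD0 (norm_nonneg _)
      (norm_pos_iff.2 ha) hΔj (Real.sqrt_nonneg _) (by rwa [Real.sq_sqrt (Nat.cast_nonneg _)]) hε
  have hsum := div_sqrt_card_smul_sum_eq (Icc 1 n) A a η
  rw [Nat.card_Icc, Nat.add_sub_cancel] at hsum
  rw [hsum, ← sub_add] at hx'
  refine inner_sub_le_of_mul_inner_sub_le hv1 hx'.1 (fun y hy => ?_) (by positivity)
    (by positivity) ?_ hmargin ?_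
  · refine (hx'.mul_inner_sub_le (convex_convexHull ℝ _) hy).trans ?_
    rw [norm_smul, Real.norm_of_nonneg hη.le]
    gcongr
  · rintro _ ⟨k, hk, rfl⟩
    exact hD.2 ⟨_, hvP ⟨k, hk, rfl⟩, _, hvP hv1, rfl⟩
  · rintro _ ⟨k, hk, rfl⟩ hlt
    have hkj : k < j := (hgain.lt_iff_lt hk ⟨by omega, hjV⟩).1 hlt
    exact (hgain.le_iff_le hk ⟨by omega, by omega⟩).2 (by omega)
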